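/- arXiv:1405.1100 — 6 statements merged into one kernel-verified Lean document; each statement's English description precedes it below -/
import Mathlib

section
/- A C*-algebra A has the countable chain condition if and only if there exists no uncountable family (a_λ)_{λ∈Λ} of nonzero elements of A such that a_λ · x · a_μ = 0 for all x ∈ A whenever λ ≠ μ. -/
/-- A C*-algebra has the countable chain condition (CCC) if every family of pairwise
orthogonal nonzero closed two-sided ideals is countable; two closed two-sided ideals are
orthogonal if their intersection is the zero ideal.  (Only the ring and topological
structure of the algebra are needed to state this.) -/
def CStarCCC (A : Type*) [NonUnitalNonAssocRing A] [TopologicalSpace A] : Prop :=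
  ∀ 𝒮 : Set (TwoSidedIdeal A), (∀ I ∈ 𝒮, IsClosed (I : Set A)) →
    (∀ I ∈ 𝒮, I ≠ ⊥) → (𝒮.Pairwise fun I J => I ⊓ J = ⊥) → 𝒮.Countable

section Aux

variable {A : Type*} [NonUnitalCStarAlgebra A]

/-- If `c * x * c = 0` for every `x`, then `c = 0` (C*-identity trick). -/
lemma aux_eq_zero (c : A) (h : ∀ x : A, c * x * c = 0) : c = 0 := by
  have h1 : c * star c * c = 0 := h (star c)
  have h2 : (c * star c) * (c * star c) = 0 := by
    rw [← mul_assoc, h1, zero_mul]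
  have h3 : c * star c = 0 := by
    rw [← norm_eq_zero, ← mul_self_eq_zero (a := ‖c * star c‖),
      ← CStarRing.norm_star_mul_self, star_mul, star_star, h2, norm_zero]
  rw [← norm_eq_zero, ← mul_self_eq_zero (a := ‖c‖),
    ← CStarRing.norm_self_mul_star, h3, norm_zero]

/-- The closed two-sided ideal generated by `a`. -/
noncomputable def clIdeal (a : A) : TwoSidedIdeal A :=
  TwoSidedIdeal.mk' (closure (TwoSidedIdeal.span {a} : Set A))
    (subset_closure (TwoSidedIdeal.span {a}).zero_mem)
    (fun hx hy => map_mem_closure₂ continuous_add hx hy fun _ hu _ hv =>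
      (TwoSidedIdeal.span {a}).add_mem hu hv)
    (fun hx => map_mem_closure continuous_neg hx fun _ hu =>
      (TwoSidedIdeal.span {a}).neg_mem hu)
    (fun {x _} hy => map_mem_closure (continuous_mul_left x) hy fun u hu =>
      SetLike.mem_coe.2 <| (TwoSidedIdeal.span {a}).mul_mem_left x u (SetLike.mem_coe.1 hu))
    (fun {_ y} hx => map_mem_closure (f := (· * y)) (continuous_mul_right y) hx fun u hu =>
      SetLike.mem_coe.2 <| (TwoSidedIdeal.span {a}).mul_mem_right u y (SetLike.mem_coe.1 hu))

lemma mem_clIdeal {a x : A} :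
    x ∈ clIdeal a ↔ x ∈ closure (TwoSidedIdeal.span {a} : Set A) :=
  TwoSidedIdeal.mem_mk' _ _ _ _ _ _ _

lemma self_mem_clIdeal (a : A) : a ∈ clIdeal a :=
  mem_clIdeal.2 <| subset_closure <| TwoSidedIdeal.subset_span rfl

lemma clIdeal_isClosed (a : A) : IsClosed ((clIdeal a : TwoSidedIdeal A) : Set A) := by
  have : ((clIdeal a : TwoSidedIdeal A) : Set A)
      = closure (TwoSidedIdeal.span {a} : Set A) := by
    ext x; exact mem_clIdeal
  rw [this]; exact isClosed_closure

/-- The set of `u` with `u * x * b = 0` for all `x` is a closed two-sided ideal. -/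
lemma clIdeal_orth {a b : A} (hab : ∀ x : A, a * x * b = 0)
    {u v : A} (hu : u ∈ clIdeal a) (hv : v ∈ clIdeal b) (x : A) : u * x * v = 0 := by
  -- Step 1: every `u ∈ clIdeal a` satisfies `u * x * b = 0` for all `x`.
  have step1 : ∀ u ∈ clIdeal a, ∀ x : A, u * x * b = 0 := by
    set T : TwoSidedIdeal A := TwoSidedIdeal.mk' {u : A | ∀ x : A, u * x * b = 0}
      (fun x => by simp)
      (fun {p q} hp hq x => by simp [add_mul, hp x, hq x])
      (fun {p} hp x => by simp [hp x])
      (fun {p q} hq x => by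
        rw [mul_assoc p q x, mul_assoc p (q * x) b, hq x, mul_zero])
      (fun {p q} hp x => by rw [mul_assoc p q x]; exact hp (q * x))
    have hTmem : ∀ {w : A}, w ∈ T ↔ ∀ x : A, w * x * b = 0 := fun {w} =>
      TwoSidedIdeal.mem_mk' _ _ _ _ _ _ _
    have hTclosed : IsClosed {u : A | ∀ x : A, u * x * b = 0} := by
      have : {u : A | ∀ x : A, u * x * b = 0} =
          ⋂ x : A, (fun u : A => u * x * b) ⁻¹' {0} := by
        ext u; simp [Set.mem_iInter]
      rw [this]
      exact isClosed_iInter fun x => IsClosed.preimage (by fun_prop) isClosed_singleton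
    have hspan : (TwoSidedIdeal.span {a} : Set A) ⊆ {u : A | ∀ x : A, u * x * b = 0} := by
      intro w hw
      have : w ∈ T := TwoSidedIdeal.mem_span_iff.1 hw T (by
        intro z hz
        rcases hz with rfl
        exact hTmem.2 hab)
      exact hTmem.1 this
    intro u hu
    exact hTclosed.closure_subset_iff.2 hspan (mem_clIdeal.1 hu)
  -- Step 2: fix `u`; every `v ∈ clIdeal b` satisfies `u * x * v = 0`.
  have hub : ∀ x : A, u * x * b = 0 := step1 u hu
  set T : TwoSidedIdeal A := TwoSidedIdeal.mk' {v : A | ∀ x : A, u * x * v = 0}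
    (fun x => by simp)
    (fun {p q} hp hq x => by simp [mul_add, hp x, hq x])
    (fun {p} hp x => by simp [hp x])
    (fun {p q} hq x => by rw [show u * x * (p * q) = u * (x * p) * q by noncomm_ring, hq (x * p)])
    (fun {p q} hp x => by rw [show u * x * (p * q) = (u * x * p) * q by noncomm_ring, hp x,
      zero_mul])
  have hTmem : ∀ {w : A}, w ∈ T ↔ ∀ x : A, u * x * w = 0 := fun {w} =>
    TwoSidedIdeal.mem_mk' _ _ _ _ _ _ _
  have hTclosed : IsClosed {v : A | ∀ x : A, u * x * v = 0} := by
    have : {v : A | ∀ x : A, u * x * v = 0} =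
        ⋂ x : A, (fun v : A => u * x * v) ⁻¹' {0} := by
      ext v; simp [Set.mem_iInter]
    rw [this]
    exact isClosed_iInter fun x => IsClosed.preimage (by fun_prop) isClosed_singleton
  have hspan : (TwoSidedIdeal.span {b} : Set A) ⊆ {v : A | ∀ x : A, u * x * v = 0} := by
    intro w hw
    have : w ∈ T := TwoSidedIdeal.mem_span_iff.1 hw T (by
      intro z hz
      rcases hz with rfl
      exact hTmem.2 hub)
    exact hTmem.1 this
  exact hTclosed.closure_subset_iff.2 hspan (mem_clIdeal.1 hv) x

end Aux

/-- A C*-algebra `A` has the countable chain condition if and only if there is no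
uncountable family of nonzero elements `a` of `A` such that `a * x * b = 0` for all
`x ∈ A` whenever `a ≠ b` are two members of the family. -/
theorem stmt_1 (A : Type*) [NonUnitalCStarAlgebra A] :
    CStarCCC A ↔
      ¬∃ S : Set A, ¬S.Countable ∧ (∀ a ∈ S, a ≠ 0) ∧
        S.Pairwise fun a b => ∀ x : A, a * x * b = 0 := by
  constructor
  · rintro hccc ⟨S, hScnt, hSne, hSpair⟩
    -- build the family of closed ideals
    have hinj : Set.InjOn (fun a : A => clIdeal a) S := by
      intro a ha b hb hab
      by_contra hne
      have hab' : clIdeal a = clIdeal b := hab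
      have h0 : ∀ x : A, a * x * a = 0 := fun x =>
        clIdeal_orth (hSpair ha hb hne) (self_mem_clIdeal a)
          (hab' ▸ self_mem_clIdeal a) x
      exact hSne a ha (aux_eq_zero a h0)
    apply hScnt
    have := hccc ((fun a : A => clIdeal a) '' S)
      (by rintro I ⟨a, _, rfl⟩; exact clIdeal_isClosed a)
      (by rintro I ⟨a, ha, rfl⟩ hbot
          have hbot' : clIdeal a = ⊥ := hbot
          exact hSne a ha (by
            have := self_mem_clIdeal a
            rw [hbot'] at this
            exact (TwoSidedIdeal.mem_bot _).mp this))
      (by rintro I ⟨a, ha, rfl⟩ J ⟨b, hb, rfl⟩ hIJ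
          have hne : a ≠ b := fun h => hIJ (by rw [h])
          refine le_antisymm ?_ bot_le
          intro c hc
          rw [TwoSidedIdeal.mem_inf] at hc
          rw [TwoSidedIdeal.mem_bot]
          exact aux_eq_zero c fun x =>
            clIdeal_orth (hSpair ha hb hne) hc.1 hc.2 x)
    exact Set.countable_of_injective_of_countable_image hinj this
  · intro hno 𝒮 _hclosed hne hpair
    by_contra h𝒮
    -- choose a nonzero element in each ideal
    have hex : ∀ I ∈ 𝒮, ∃ a : A, a ∈ I ∧ a ≠ 0 := by
      intro I hI
      by_contra hc
      push_neg at hc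
      exact hne I hI (le_antisymm (fun x hx => (TwoSidedIdeal.mem_bot _).mpr (hc x hx)) bot_le)
    choose f hf hf0 using hex
    apply hno
    refine ⟨Set.image (fun I : 𝒮 => f I.1 I.2) Set.univ, ?_, ?_, ?_⟩
    · -- uncountable
      intro hcnt
      apply h𝒮
      have hinj : Function.Injective (fun I : 𝒮 => f I.1 I.2) := by
        rintro ⟨I, hI⟩ ⟨J, hJ⟩ hIJ
        by_contra hne'
        have hIJ' : I ≠ J := fun h => hne' (Subtype.ext h)
        have : f I hI ∈ I ⊓ J := by
          rw [TwoSidedIdeal.mem_inf]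
          exact ⟨hf I hI, by rw [show f I hI = f J hJ from hIJ]; exact hf J hJ⟩
        rw [hpair hI hJ hIJ', TwoSidedIdeal.mem_bot] at this
        exact hf0 I hI this
      rw [Set.image_univ] at hcnt
      have hpre := hcnt.preimage hinj
      rw [Set.preimage_range, Set.countable_univ_iff] at hpre
      exact Set.countable_coe_iff.mp hpre
    · rintro a ⟨⟨I, hI⟩, -, rfl⟩
      exact hf0 I hI
    · rintro a ⟨⟨I, hI⟩, -, rfl⟩ b ⟨⟨J, hJ⟩, -, rfl⟩ hab x
      have hIJ : I ≠ J := by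
        rintro rfl
        exact hab rfl
      have hmem : f I hI * x * f J hJ ∈ I ⊓ J := by
        rw [TwoSidedIdeal.mem_inf]
        exact ⟨I.mul_mem_right _ _ (I.mul_mem_right _ _ (hf I hI)),
          J.mul_mem_left _ _ (hf J hJ)⟩
      rw [hpair hI hJ hIJ, TwoSidedIdeal.mem_bot] at hmem
      exact hmem
end

section
/- A von Neumann algebra M (a unital *-subalgebra of the bounded operators on a complex Hilbert space equal to its double commutant) has the countable chain condition if and only if its center is σ-finite, i.e., the center of M admits no uncountable family of pairwise orthogonal nonzero projections. -/
namespace TwoSidedIdeal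

variable {A : Type*} [NonUnitalRing A]

-- This is `p * A` when `p` is idempotent.
def ofCentral (p : A) (hp : p ∈ Set.center A) : TwoSidedIdeal A :=
  .mk' {x | p * x = x} (mul_zero p) (fun hx hy => by simp_all [mul_add])
    (fun hx => by simp_all [mul_neg])
    (fun {x y} hy => by
      simp only [Set.mem_ofPred_eq] at hy ⊢
      rw [← mul_assoc, ← Semigroup.mem_center_iff.1 hp x, mul_assoc, hy])
    (fun {x y} hx => by simp only [Set.mem_ofPred_eq] at hx ⊢; rw [← mul_assoc, hx])

variable {p q : A} {hp : p ∈ Set.center A} {hq : q ∈ Set.center A}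

@[simp]
lemma mem_ofCentral {x : A} : x ∈ ofCentral p hp ↔ p * x = x :=
  mem_mk' ..

lemma isClosed_ofCentral [TopologicalSpace A] [T2Space A] [ContinuousMul A] :
    IsClosed (ofCentral p hp : Set A) := by
  rw [show (ofCentral p hp : Set A) = {x | p * x = x} from Set.ext fun _ => mem_ofCentral]
  exact isClosed_eq (continuous_const_mul p) continuous_id

lemma ofCentral_ne_bot (hpi : IsIdempotentElem p) (hp0 : p ≠ 0) : ofCentral p hp ≠ ⊥ := by
  intro h
  have : p ∈ ofCentral p hp := mem_ofCentral.2 hpi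
  exact hp0 (by rwa [h, mem_bot] at this)

lemma ofCentral_inf_ofCentral_eq_bot (hpq : p * q = 0) : ofCentral p hp ⊓ ofCentral q hq = ⊥ := by
  refine eq_bot_iff.2 fun x hx => ?_
  obtain ⟨hpx, hqx⟩ := (mem_inf _).1 hx
  rw [mem_ofCentral] at hpx hqx
  rw [mem_bot, ← hpx, ← hqx, ← mul_assoc, hpq, zero_mul]

lemma eq_of_ofCentral_eq (hpi : IsIdempotentElem p) (hqi : IsIdempotentElem q)
    (h : ofCentral p hp = ofCentral q hq) : p = q := by
  have hpq : q * p = p := mem_ofCentral.1 (h ▸ mem_ofCentral.2 hpi : p ∈ ofCentral q hq)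
  have hqp : p * q = q := mem_ofCentral.1 (h ▸ mem_ofCentral.2 hqi : q ∈ ofCentral p hp)
  calc p = q * p := hpq.symm
    _ = p * q := Semigroup.mem_center_iff.1 hp q
    _ = q := hqp

lemma exists_mem_ne_zero_of_ne_bot {I : TwoSidedIdeal A} (hI : I ≠ ⊥) : ∃ x ∈ I, x ≠ 0 := by
  by_contra! h
  exact hI (eq_bot_iff.2 fun x hx => (mem_bot _).2 (h x hx))

end TwoSidedIdeal

lemma countable_of_injective_of_countable_range {ι α : Type*} {f : ι → α}
    (hf : Function.Injective f) (h : (Set.range f).Countable) : Countable ι :=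
  have := h.to_subtype
  (Set.rangeFactorization_injective.2 hf).countable

lemma injective_of_pairwise_mul_eq_zero {ι R : Type*} [MulZeroClass R] {f : ι → R}
    (hf0 : ∀ i, f i ≠ 0) (hfi : ∀ i, IsIdempotentElem (f i))
    (hf : Pairwise fun i j => f i * f j = 0) : Function.Injective f := by
  intro i j hij
  by_contra hne
  apply hf0 j
  calc f j = f i * f j := by rw [hij, (hfi j).eq]
    _ = 0 := hf hne

open TwoSidedIdeal in
lemma CStarCCC.countable_of_pairwise_mul_eq_zero {A : Type*} [NonUnitalRing A]
    [TopologicalSpace A] [T2Space A] [ContinuousMul A] (hA : CStarCCC A) {P : Set A}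
    (hP : ∀ p ∈ P, p ∈ Set.center A ∧ p ≠ 0 ∧ IsIdempotentElem p)
    (hPo : P.Pairwise fun p q => p * q = 0) : P.Countable := by
  let I : P → TwoSidedIdeal A := fun p => ofCentral p (hP p p.2).1
  have hI : Function.Injective I := fun p q h =>
    Subtype.ext (eq_of_ofCentral_eq (hP p p.2).2.2 (hP q q.2).2.2 h)
  have hIc : (Set.range I).Countable := by
    refine hA _ (by rintro _ ⟨p, rfl⟩; exact isClosed_ofCentral)
      (by rintro _ ⟨p, rfl⟩; exact ofCentral_ne_bot (hP p p.2).2.2 (hP p p.2).2.1) ?_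
    rintro _ ⟨p, rfl⟩ _ ⟨q, rfl⟩ hpq
    exact ofCentral_inf_ofCentral_eq_bot (hPo p.2 q.2 fun h => hpq (congrArg I (Subtype.ext h)))
  exact Set.countable_coe_iff.1 (countable_of_injective_of_countable_range hI hIc)

open Submodule

lemma Submodule.topologicalClosure_span_mem_invtSubmodule {R M : Type*} [Semiring R]
    [TopologicalSpace R] [AddCommMonoid M] [Module R M] [TopologicalSpace M] [ContinuousSMul R M]
    [ContinuousAdd M] {f : M →L[R] M} {s : Set M} (hs : Set.MapsTo f s s) :
    (span R s).topologicalClosure ∈ Module.End.invtSubmodule (f : M →ₗ[R] M) := by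
  refine topologicalClosure_mem_invtSubmodule ?_
  rw [Module.End.mem_invtSubmodule, span_le]
  exact fun x hx => subset_span (hs hx)

lemma Submodule.isOrtho_topologicalClosure {𝕜 E : Type*} [RCLike 𝕜] [NormedAddCommGroup E]
    [InnerProductSpace 𝕜 E] {U V : Submodule 𝕜 E} (h : U ⟂ V) :
    U.topologicalClosure ⟂ V.topologicalClosure := by
  rw [isOrtho_iff_le, orthogonal_closure]
  exact topologicalClosure_minimal _ (isOrtho_iff_le.1 h) V.isClosed_orthogonal

namespace VonNeumannAlgebra

variable {H : Type*} [NormedAddCommGroup H] [InnerProductSpace ℂ H] [CompleteSpace H]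
  (M : VonNeumannAlgebra H)

noncomputable def centralSupportSpace (b : H →L[ℂ] H) : Submodule ℂ H :=
  (span ℂ {v | ∃ x ∈ M, ∃ ξ, (x * b) ξ = v}).topologicalClosure

instance (b : H →L[ℂ] H) : (M.centralSupportSpace b).HasOrthogonalProjection := by
  unfold centralSupportSpace; infer_instance

lemma centralSupportSpace_mem_invtSubmodule {b y : H →L[ℂ] H} (hb : b ∈ M)
    (hy : y ∈ M ∨ y ∈ M.commutant) :
    M.centralSupportSpace b ∈ Module.End.invtSubmodule (y : H →ₗ[ℂ] H) := by
  refine topologicalClosure_span_mem_invtSubmodule ?_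
  rintro _ ⟨x, hx, ξ, rfl⟩
  rcases hy with hy | hy
  · exact ⟨y * x, mul_mem hy hx, ξ, rfl⟩
  · exact ⟨x, hx, y ξ, congr($(mem_commutant_iff.1 hy _ (mul_mem hx hb)) ξ)⟩

/-- The central support of `b`: the smallest central projection `z` with `z * b = b`. -/
noncomputable def centralSupport (b : M) : M :=
  ⟨(M.centralSupportSpace b).starProjection,
    (IsStarProjection.mem_iff isStarProjection_starProjection M).2 fun y hy => by
      simpa using M.centralSupportSpace_mem_invtSubmodule b.2 (.inr hy)⟩

lemma centralSupport_mem_commutant (b : M) : (M.centralSupport b : H →L[ℂ] H) ∈ M.commutant :=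
  (IsStarProjection.mem_iff isStarProjection_starProjection _).2 fun y hy => by
    simpa using M.centralSupportSpace_mem_invtSubmodule b.2 (.inl (by simpa using hy))

lemma centralSupport_mem_center (b : M) : M.centralSupport b ∈ Set.center M :=
  Semigroup.mem_center_iff.2 fun g =>
    Subtype.ext (mem_commutant_iff.1 (M.centralSupport_mem_commutant b) g g.2)

lemma isStarProjection_centralSupport (b : M) : IsStarProjection (M.centralSupport b) :=
  ⟨Subtype.ext isStarProjection_starProjection.isIdempotentElem,
    Subtype.ext isStarProjection_starProjection.isSelfAdjoint⟩

lemma centralSupport_ne_zero {b : M} (hb : b ≠ 0) : M.centralSupport b ≠ 0 := by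
  obtain ⟨ξ, hξ⟩ : ∃ ξ, (b : H →L[ℂ] H) ξ ≠ 0 := by
    by_contra! h
    exact hb (Subtype.ext (ContinuousLinearMap.ext h))
  have hmem : (b : H →L[ℂ] H) ξ ∈ M.centralSupportSpace b :=
    le_topologicalClosure _ (subset_span ⟨1, one_mem M, ξ, by simp⟩)
  intro h0
  apply hξ
  rw [← starProjection_eq_self_iff.2 hmem]
  exact congr($(congrArg Subtype.val h0) ((b : H →L[ℂ] H) ξ))

lemma centralSupport_mul_centralSupport_eq_zero {b c : M} (h : ∀ m : M, star b * m * c = 0) :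
    M.centralSupport b * M.centralSupport c = 0 := by
  have hortho : M.centralSupportSpace b ⟂ M.centralSupportSpace c := by
    refine isOrtho_topologicalClosure (isOrtho_span.2 ?_)
    rintro _ ⟨x, hx, ξ, rfl⟩ _ ⟨y, hy, η, rfl⟩
    have hzero : star (x * b) * (y * c) = 0 := by
      simpa [mul_assoc] using congrArg Subtype.val (h (star ⟨x, hx⟩ * ⟨y, hy⟩))
    rw [← ContinuousLinearMap.adjoint_inner_right, ← ContinuousLinearMap.star_eq_adjoint]
    change inner ℂ ξ ((star (x * b) * (y * c)) η) = 0
    rw [hzero, zero_apply, inner_zero_right]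
  exact Subtype.ext hortho.starProjection_comp_starProjection

lemma centralSupport_mul_centralSupport_eq_zero_of_inf_eq_bot {I J : TwoSidedIdeal M}
    (hIJ : I ⊓ J = ⊥) {a c : M} (ha : a ∈ I) (hc : c ∈ J) :
    M.centralSupport (a * star a) * M.centralSupport (c * star c) = 0 :=
  M.centralSupport_mul_centralSupport_eq_zero fun m => by
    rw [star_mul, star_star, ← TwoSidedIdeal.mem_bot, ← hIJ, TwoSidedIdeal.mem_inf]
    exact ⟨I.mul_mem_right _ _ (I.mul_mem_right _ _ (I.mul_mem_right _ _ ha)),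
      J.mul_mem_left _ _ (J.mul_mem_right _ _ hc)⟩

lemma mul_star_self_ne_zero {a : M} (ha : a ≠ 0) : a * star a ≠ 0 := fun h =>
  ha (Subtype.ext ((CStarRing.mul_star_self_eq_zero_iff _).1 congr(Subtype.val $h)))

end VonNeumannAlgebra

/-- A von Neumann algebra `M` (a unital *-subalgebra of bounded operators on a complex
Hilbert space equal to its double commutant) has the countable chain condition if and
only if its center is σ-finite, i.e. the center of `M` admits no uncountable family of
pairwise orthogonal nonzero projections. -/
theorem stmt_2 {H : Type*} [NormedAddCommGroup H] [InnerProductSpace ℂ H]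
    [CompleteSpace H] (M : VonNeumannAlgebra H) :
    CStarCCC M ↔
      ¬∃ P : Set M, ¬P.Countable ∧
        (∀ p ∈ P, p ∈ Set.center M ∧ p ≠ 0 ∧ IsSelfAdjoint p ∧ IsIdempotentElem p) ∧
        P.Pairwise fun p q => p * q = 0 := by
  constructor
  · rintro hM ⟨P, hP, hPz, hPo⟩
    exact hP (hM.countable_of_pairwise_mul_eq_zero
      (fun p hp => ⟨(hPz p hp).1, (hPz p hp).2.1, (hPz p hp).2.2.2⟩) hPo)
  · intro hM 𝒮 _ h𝒮 hpair
    by_contra h𝒮c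
    choose a haI ha0 using fun I : 𝒮 => TwoSidedIdeal.exists_mem_ne_zero_of_ne_bot (h𝒮 I I.2)
    let z := fun I : 𝒮 => M.centralSupport (a I * star (a I))
    have hz0 : ∀ I, z I ≠ 0 := fun I => M.centralSupport_ne_zero (M.mul_star_self_ne_zero (ha0 I))
    have hzo : Pairwise fun I J => z I * z J = 0 := fun I J hIJ =>
      M.centralSupport_mul_centralSupport_eq_zero_of_inf_eq_bot
        (hpair I.2 J.2 (Subtype.coe_ne_coe.2 hIJ)) (haI I) (haI J)
    have hz := injective_of_pairwise_mul_eq_zero hz0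
      (fun I => (M.isStarProjection_centralSupport _).isIdempotentElem) hzo
    refine hM ⟨Set.range z, fun hc => h𝒮c ?_, ?_, ?_⟩
    · exact Set.countable_coe_iff.1 (countable_of_injective_of_countable_range hz hc)
    · rintro _ ⟨I, rfl⟩
      exact ⟨M.centralSupport_mem_center _, hz0 I,
        (M.isStarProjection_centralSupport _).isSelfAdjoint,
        (M.isStarProjection_centralSupport _).isIdempotentElem⟩
    · rintro _ ⟨I, rfl⟩ _ ⟨J, rfl⟩ hIJ
      exact hzo fun h => hIJ (congrArg z h)
end

section
/- The Stone–Čech remainder βℕ∖ℕ (the complement of the image of ℕ in its Stone–Čech compactification) admits an uncountable family of pairwise disjoint nonempty open subsets; in particular, βℕ∖ℕ does not have the countable chain condition, even though βℕ does. -/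
/-!
`βℕ` is separable, hence CCC. For `A ⊆ ℕ` the closure of `A` in `βℕ` is clopen, these closures
commute with intersections, and the closure of `A` meets the remainder iff `A` is infinite. An
almost disjoint family of size continuum, the prefix sets of the branches of the binary tree,
therefore yields continuum many pairwise disjoint nonempty open subsets of `βℕ ∖ ℕ`.
-/

/-- A topological space has the countable chain condition (CCC) if every family of
pairwise disjoint nonempty open subsets is countable. -/
def TopCCC (X : Type*) [TopologicalSpace X] : Prop :=
  ∀ 𝒰 : Set (Set X), (∀ U ∈ 𝒰, IsOpen U) → (∀ U ∈ 𝒰, U.Nonempty) →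
    𝒰.Pairwise Disjoint → 𝒰.Countable

open Set Function

theorem topCCC_of_separableSpace (X : Type*) [TopologicalSpace X]
    [TopologicalSpace.SeparableSpace X] : TopCCC X :=
  fun _ hopen hne hdisj => Set.PairwiseDisjoint.countable_of_isOpen (s := id) hdisj hopen hne

theorem IsClopen.closure_image_preimage_eq {α X : Type*} [TopologicalSpace X] {f : α → X}
    (hf : DenseRange f) {V : Set X} (hV : IsClopen V) : closure (f '' (f ⁻¹' V)) = V := by
  rw [image_preimage_eq_inter_range]
  exact (closure_minimal inter_subset_left hV.isClosed).antisymm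
    (hf.open_subset_closure_inter hV.isOpen)

instance {α : Type*} [TopologicalSpace α] [Countable α] :
    TopologicalSpace.SeparableSpace (StoneCech α) :=
  denseRange_stoneCechUnit.separableSpace'

section StoneCech

variable {α : Type*} [TopologicalSpace α] [DiscreteTopology α]

theorem exists_isClopen_stoneCechUnit_preimage_eq (A : Set α) :
    ∃ V : Set (StoneCech α), IsClopen V ∧ stoneCechUnit ⁻¹' V = A := by
  classical
  let g := stoneCechExtend (continuous_of_discreteTopology (f := fun a => decide (a ∈ A)))
  refine ⟨g ⁻¹' {true}, (isClopen_discrete _).preimage (continuous_stoneCechExtend _), ?_⟩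
  ext a
  simp [g]

theorem isClopen_closure_image_stoneCechUnit (A : Set α) :
    IsClopen (closure (stoneCechUnit '' A : Set (StoneCech α))) := by
  obtain ⟨V, hV, hVA⟩ := exists_isClopen_stoneCechUnit_preimage_eq A
  rwa [← hVA, hV.closure_image_preimage_eq denseRange_stoneCechUnit]

theorem stoneCechUnit_preimage_closure_image (A : Set α) :
    stoneCechUnit ⁻¹' closure (stoneCechUnit '' A : Set (StoneCech α)) = A := by
  obtain ⟨V, hV, hVA⟩ := exists_isClopen_stoneCechUnit_preimage_eq A
  rw [← hVA, hV.closure_image_preimage_eq denseRange_stoneCechUnit]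

theorem closure_image_stoneCechUnit_inter (A B : Set α) :
    closure (stoneCechUnit '' (A ∩ B) : Set (StoneCech α)) =
      closure (stoneCechUnit '' A) ∩ closure (stoneCechUnit '' B) := by
  conv_lhs => rw [← stoneCechUnit_preimage_closure_image A,
    ← stoneCechUnit_preimage_closure_image B, ← preimage_inter]
  exact ((isClopen_closure_image_stoneCechUnit A).inter
    (isClopen_closure_image_stoneCechUnit B)).closure_image_preimage_eq denseRange_stoneCechUnit

theorem stoneCechUnit_injective : Injective (stoneCechUnit : α → StoneCech α) := by
  intro a b h
  have : b ∈ stoneCechUnit ⁻¹' closure (stoneCechUnit '' {a} : Set (StoneCech α)) :=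
    subset_closure ⟨a, rfl, h⟩
  rwa [stoneCechUnit_preimage_closure_image, mem_singleton_iff, eq_comm] at this

theorem isOpen_singleton_stoneCechUnit (a : α) : IsOpen {(stoneCechUnit a : StoneCech α)} := by
  simpa using (isClopen_closure_image_stoneCechUnit {a}).isOpen

theorem closure_image_stoneCechUnit_subset_range_iff {A : Set α} :
    closure (stoneCechUnit '' A : Set (StoneCech α)) ⊆ range stoneCechUnit ↔ A.Finite := by
  refine ⟨fun hsub => ?_, fun hA => ?_⟩
  · refine not_infinite.1 fun hA => ?_
    obtain ⟨x, hx⟩ := (hA.image stoneCechUnit_injective.injOn).exists_accPt_principal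
    obtain ⟨a, rfl⟩ := hsub (mem_closure_iff_clusterPt.2 hx.clusterPt)
    obtain ⟨y, ⟨hy, -⟩, hne⟩ :=
      accPt_iff_nhds.1 hx _ ((isOpen_singleton_stoneCechUnit a).mem_nhds rfl)
    exact hne hy
  · rw [(hA.image _).isClosed.closure_eq]
    exact image_subset_range _ _

def remainderTrace (A : Set α) :
    Set ((range (stoneCechUnit : α → StoneCech α))ᶜ : Set (StoneCech α)) :=
  Subtype.val ⁻¹' closure (stoneCechUnit '' A)

theorem isOpen_remainderTrace (A : Set α) : IsOpen (remainderTrace A) :=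
  (isClopen_closure_image_stoneCechUnit A).isOpen.preimage continuous_subtype_val

theorem remainderTrace_nonempty {A : Set α} (hA : A.Infinite) : (remainderTrace A).Nonempty := by
  obtain ⟨x, hxA, hx⟩ := not_subset.1 (mt closure_image_stoneCechUnit_subset_range_iff.1 hA)
  exact ⟨⟨x, hx⟩, hxA⟩

theorem disjoint_remainderTrace {A B : Set α} (hAB : (A ∩ B).Finite) :
    Disjoint (remainderTrace A) (remainderTrace B) := by
  refine disjoint_left.2 fun z hzA hzB => z.2 ?_
  refine closure_image_stoneCechUnit_subset_range_iff.2 hAB ?_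
  rw [closure_image_stoneCechUnit_inter]
  exact ⟨hzA, hzB⟩

end StoneCech

def prefixes (x : ℕ → Bool) : Set (List Bool) :=
  range fun n => (List.range n).map x

theorem prefixes_infinite (x : ℕ → Bool) : (prefixes x).Infinite :=
  infinite_range_of_injective fun m n h => by simpa using congrArg List.length h

theorem prefixes_inter_prefixes_finite {x y : ℕ → Bool} (hxy : x ≠ y) :
    (prefixes x ∩ prefixes y).Finite := by
  obtain ⟨k, hk⟩ := ne_iff.1 hxy
  refine ((finite_Iic k).image fun n => (List.range n).map x).subset ?_
  rintro _ ⟨⟨n, rfl⟩, m, hmn⟩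
  obtain rfl : m = n := by simpa using congrArg List.length hmn
  refine ⟨m, mem_Iic.2 (not_lt.1 fun hkm => hk ?_), rfl⟩
  exact ((List.map_inj_left.1 hmn) k (List.mem_range.2 hkm)).symm

theorem exists_almostDisjoint_family :
    ∃ A : (ℕ → Bool) → Set ℕ, (∀ x, (A x).Infinite) ∧ Pairwise fun x y => (A x ∩ A y).Finite :=
  ⟨fun x => Encodable.encode '' prefixes x,
    fun x => (prefixes_infinite x).image Encodable.encode_injective.injOn,
    fun _ _ hxy => by
      simpa only [← image_inter Encodable.encode_injective]
        using (prefixes_inter_prefixes_finite hxy).image _⟩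

instance : Uncountable (ℕ → Bool) := by
  rw [← Cardinal.aleph0_lt_mk_iff]
  simpa using Cardinal.cantor Cardinal.aleph0

theorem not_countable_range_of_pairwise_disjoint {ι X : Type*} [Uncountable ι] {U : ι → Set X}
    (hne : ∀ i, (U i).Nonempty) (hd : Pairwise (Disjoint on U)) : ¬(range U).Countable := by
  have hinj : Injective U := fun i j h => by_contra fun hij => by
    have hdisj : Disjoint (U i) (U j) := hd hij
    rw [h, disjoint_self, bot_eq_empty] at hdisj
    exact (hne j).ne_empty hdisj
  intro hc
  have hcι := hc.preimage hinj
  rw [preimage_range, countable_univ_iff] at hcι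
  exact not_countable hcι

/-- The Stone–Čech remainder `βℕ ∖ ℕ` admits an uncountable family of pairwise disjoint
nonempty open subsets; in particular it does not have the countable chain condition,
even though `βℕ` does. -/
theorem stmt_6 :
    (∃ 𝒰 : Set (Set ((Set.range (stoneCechUnit : ℕ → StoneCech ℕ))ᶜ : Set (StoneCech ℕ))),
      ¬𝒰.Countable ∧ (∀ U ∈ 𝒰, IsOpen U) ∧ (∀ U ∈ 𝒰, U.Nonempty) ∧ 𝒰.Pairwise Disjoint) ∧
    ¬TopCCC ((Set.range (stoneCechUnit : ℕ → StoneCech ℕ))ᶜ : Set (StoneCech ℕ)) ∧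
    TopCCC (StoneCech ℕ) := by
  obtain ⟨A, hA, hAB⟩ := exists_almostDisjoint_family
  let 𝒰 := range fun x => remainderTrace (A x)
  have hchain : Pairwise (Disjoint on fun x => remainderTrace (A x)) :=
    fun _ _ hxy => disjoint_remainderTrace (hAB hxy)
  have h𝒰 : ¬𝒰.Countable ∧ (∀ U ∈ 𝒰, IsOpen U) ∧ (∀ U ∈ 𝒰, U.Nonempty) ∧
      𝒰.Pairwise Disjoint :=
    ⟨not_countable_range_of_pairwise_disjoint (fun x => remainderTrace_nonempty (hA x)) hchain,
      forall_mem_range.2 fun x => isOpen_remainderTrace (A x),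
      forall_mem_range.2 fun x => remainderTrace_nonempty (hA x), hchain.range_pairwise⟩
  exact ⟨⟨𝒰, h𝒰⟩, fun hccc => h𝒰.1 (hccc 𝒰 h𝒰.2.1 h𝒰.2.2.1 h𝒰.2.2.2),
    topCCC_of_separableSpace _⟩
end

section
/- Every C*-subalgebra of a commutative C*-algebra with the countable chain condition has the countable chain condition. -/
/-- The annihilator of a set in a nonunital commutative ring, as a two-sided ideal. -/
def annTSI {A : Type*} [NonUnitalCommRing A] (s : Set A) : TwoSidedIdeal A :=
  TwoSidedIdeal.mk' {a | ∀ x ∈ s, a * x = 0}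
    (fun x _ => zero_mul x)
    (fun hx hy x hxs => by rw [add_mul, hx x hxs, hy x hxs, add_zero])
    (fun hx x hxs => by rw [neg_mul, hx x hxs, neg_zero])
    (fun {b a} ha x hxs => by rw [mul_assoc, ha x hxs, mul_zero])
    (fun {a b} ha x hxs => by rw [mul_comm a b, mul_assoc, ha x hxs, mul_zero])

lemma myMemInf {R : Type*} [NonUnitalNonAssocRing R] {I J : TwoSidedIdeal R} {x : R} :
    x ∈ I ⊓ J ↔ x ∈ I ∧ x ∈ J := Iff.rfl

lemma mem_annTSI {A : Type*} [NonUnitalCommRing A] {s : Set A} {a : A} :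
    a ∈ annTSI s ↔ ∀ x ∈ s, a * x = 0 :=
  TwoSidedIdeal.mem_mk' _ _ _ _ _ _ a

lemma isClosed_annTSI {A : Type*} [NonUnitalCommRing A] [TopologicalSpace A]
    [ContinuousMul A] [T2Space A] (s : Set A) : IsClosed ((annTSI s : Set A)) := by
  have : ((annTSI s : Set A)) = ⋂ x ∈ s, {a : A | a * x = 0} := by
    ext a
    simp [SetLike.mem_coe, mem_annTSI]
  rw [this]
  exact isClosed_biInter fun x _ => isClosed_eq (continuous_mul_right x) continuous_const

lemma sq_eq_zero_cstar {A : Type*} [NonUnitalCommCStarAlgebra A] {z : A}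
    (h : z * z = 0) : z = 0 := by
  have hw : (star z * z) * (star z * z) = (star z * star z) * (z * z) :=
    mul_mul_mul_comm _ _ _ _
  rw [h, mul_zero] at hw
  have h1 : star (star z * z) = star z * z := by
    rw [star_mul, star_star, mul_comm]
  have h2 : ‖star z * z‖ * ‖star z * z‖ = 0 := by
    rw [← CStarRing.norm_star_mul_self, h1, hw, norm_zero]
  have h3 : ‖star z * z‖ = 0 := by
    exact mul_self_eq_zero.mp h2
  have h4 : ‖z‖ * ‖z‖ = 0 := by rw [← CStarRing.norm_star_mul_self, h3]
  have : ‖z‖ = 0 := mul_self_eq_zero.mp h4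
  exact norm_eq_zero.mp this

/-- Every C*-subalgebra (closed *-subalgebra) of a commutative C*-algebra with the
countable chain condition has the countable chain condition. -/
theorem stmt_8 (A : Type*) [NonUnitalCommCStarAlgebra A] (hA : CStarCCC A)
    (B : NonUnitalStarSubalgebra ℂ A) (hB : IsClosed (B : Set A)) :
    CStarCCC B := by
  intro 𝒮 _hclosed hne hpair
  classical
  -- image of an ideal of B in A
  set S : TwoSidedIdeal B → Set A := fun I => (Subtype.val) '' ((I : Set B)) with hS
  set Φ : TwoSidedIdeal B → TwoSidedIdeal A := fun I => annTSI ((annTSI (S I) : Set A))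
    with hΦ
  -- members of I inject into Φ I
  have hsub : ∀ (I : TwoSidedIdeal B) (x : B), x ∈ I → (x : A) ∈ Φ I := by
    intro I x hx
    rw [hΦ, mem_annTSI]
    intro a ha
    rw [SetLike.mem_coe, mem_annTSI] at ha
    rw [mul_comm]
    exact ha _ ⟨x, hx, rfl⟩
  have hΦne : ∀ I ∈ 𝒮, Φ I ≠ ⊥ := by
    intro I hI hbot
    apply hne I hI
    apply TwoSidedIdeal.ext
    intro x
    simp only [TwoSidedIdeal.mem_bot]
    constructor
    · intro hx
      have := hsub I x hx
      rw [hbot, TwoSidedIdeal.mem_bot] at this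
      exact Subtype.val_injective (by simpa using this)
    · rintro rfl; exact I.zero_mem
  -- orthogonality is preserved
  have horth : ∀ I J : TwoSidedIdeal B, I ⊓ J = ⊥ → Φ I ⊓ Φ J = ⊥ := by
    intro I J hIJ
    have hST : S J ⊆ (annTSI (S I) : Set A) := by
      rintro _ ⟨c, hc, rfl⟩
      rw [SetLike.mem_coe, mem_annTSI]
      rintro _ ⟨b, hb, rfl⟩
      have : c * b ∈ I ⊓ J := myMemInf.mpr ⟨I.mul_mem_left _ _ hb,
        J.mul_mem_right _ _ hc⟩
      rw [hIJ, TwoSidedIdeal.mem_bot] at this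
      calc (c : A) * (b : A) = ((c * b : B) : A) := by norm_cast
        _ = ((0 : B) : A) := by rw [this]
        _ = 0 := by simp
    apply TwoSidedIdeal.ext
    intro z
    rw [myMemInf, TwoSidedIdeal.mem_bot]
    constructor
    · rintro ⟨hzI, hzJ⟩
      rw [hΦ, mem_annTSI] at hzI hzJ
      have hzannJ : z ∈ (annTSI (S J) : Set A) := by
        rw [SetLike.mem_coe, mem_annTSI]
        intro y hy
        exact hzI y (hST hy)
      have : z * z = 0 := hzJ z hzannJ
      exact sq_eq_zero_cstar this
    · rintro rfl
      exact ⟨(Φ I).zero_mem, (Φ J).zero_mem⟩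
  -- injectivity on 𝒮
  have hinj : Set.InjOn Φ 𝒮 := by
    intro I hI J hJ hEq
    by_contra hne'
    have h1 : Φ I ⊓ Φ J = ⊥ := horth I J (hpair hI hJ hne')
    rw [hEq, inf_idem] at h1
    exact hΦne J hJ h1
  -- apply CCC of A to the image family
  have hcount : (Φ '' 𝒮).Countable := by
    apply hA
    · rintro _ ⟨I, _, rfl⟩
      exact isClosed_annTSI _
    · rintro _ ⟨I, hI, rfl⟩
      exact hΦne I hI
    · rintro _ ⟨I, hI, rfl⟩ _ ⟨J, hJ, rfl⟩ hne'
      have hIJ : I ≠ J := fun h => hne' (by rw [h])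
      exact horth I J (hpair hI hJ hIJ)
  exact (Set.mapsTo_image Φ 𝒮).countable_of_injOn hinj hcount
end

section
/- If S is a Suslin line, then the product space S × S (with the product of the order topologies) does not have the countable chain condition; indeed, there exists an ω₁-indexed family of pairwise disjoint nonempty open subsets of S × S. -/
/-- A Suslin line is a linearly ordered set, equipped with the order topology, which is
unbounded (no minimum and no maximum), densely ordered, complete (every nonempty set
bounded above has a least upper bound and every nonempty set bounded below has a greatest
lower bound), has the countable chain condition but is not separable. -/
def IsSuslinLine (S : Type*) [LinearOrder S] [TopologicalSpace S] [OrderTopology S] :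
    Prop :=
  NoMinOrder S ∧ NoMaxOrder S ∧ DenselyOrdered S ∧
    (∀ s : Set S, s.Nonempty → BddAbove s → ∃ a, IsLUB s a) ∧
    (∀ s : Set S, s.Nonempty → BddBelow s → ∃ a, IsGLB s a) ∧
    TopCCC S ∧ ¬TopologicalSpace.SeparableSpace S

/-! Since `S` is not separable, no countable set is dense, so by recursion along `ω₁` one can
choose `a α < b α < c α` with `(a α, c α)` missing every earlier `b β`. The open rectangles
`(a α, b α) × (b α, c α)` are then pairwise disjoint: for `β < α`, either `b β ≤ a α` separates the
first coordinates or `c α ≤ b β` separates the second. -/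

open Set Function

theorem not_topCCC_of_pairwise_disjoint {X ι : Type*} [TopologicalSpace X] [Uncountable ι]
    (U : ι → Set X) (hopen : ∀ i, IsOpen (U i)) (hne : ∀ i, (U i).Nonempty)
    (hdisj : Pairwise (Disjoint on U)) : ¬TopCCC X := by
  intro hccc
  have hinj : Injective U := fun i j hij =>
    by_contra fun hij' => (hdisj hij').ne (hne i).ne_empty hij
  have hrange : (range U).Countable :=
    hccc _ (forall_mem_range.2 hopen) (forall_mem_range.2 hne) hdisj.range_pairwise
  exact not_countable_univ <| (mapsTo_range U univ).countable_of_injOn hinj.injOn hrange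

theorem countable_Iio_ord_aleph_one (i : (Cardinal.aleph 1).ord.ToType) : (Iio i).Countable := by
  have h := Cardinal.mk_Iio_lt i (by simp)
  rw [Cardinal.mk_toType, Cardinal.card_ord] at h
  exact Cardinal.le_aleph0_iff_set_countable.1 (Order.lt_succ_iff.1 (by simpa using h))

instance : Uncountable (Cardinal.aleph 1).ord.ToType := by
  rw [← Cardinal.aleph0_lt_mk_iff, Cardinal.mk_toType, Cardinal.card_ord]
  exact Cardinal.aleph0_lt_aleph_one

theorem exists_forall_image_Iio_of_countable {ι α : Type*} [Preorder ι] [WellFoundedLT ι]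
    (hι : ∀ i : ι, (Iio i).Countable) (P : Set α → α → Prop)
    (hP : ∀ D : Set α, D.Countable → ∃ x, P D x) :
    ∃ f : ι → α, ∀ i, P (f '' Iio i) (f i) := by
  have hrange (i : ι) (g : Iio i → α) : (range g).Countable :=
    have := (hι i).to_subtype
    countable_range g
  let f : ι → α := WellFoundedLT.fix fun i rec =>
    Classical.choose (hP (range fun j : Iio i => rec j j.2) (hrange i _))
  refine ⟨f, fun i => ?_⟩
  rw [image_eq_range, show f i = _ from WellFoundedLT.fix_eq _ i]
  exact Classical.choose_spec _

theorem exists_Ioo_disjoint_of_not_separableSpace {S : Type*} [LinearOrder S]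
    [TopologicalSpace S] [OrderTopology S] [NoMinOrder S] [NoMaxOrder S]
    (hS : ¬TopologicalSpace.SeparableSpace S) {D : Set S} (hD : D.Countable) :
    ∃ a b c : S, a < b ∧ b < c ∧ Disjoint (Ioo a c) D := by
  obtain ⟨b, hb⟩ : ∃ b, b ∉ closure D := by
    by_contra! hdense
    exact hS ⟨D, hD, dense_iff_closure_eq.2 (eq_univ_of_forall hdense)⟩
  obtain ⟨a, c, hac, hsub⟩ :=
    mem_nhds_iff_exists_Ioo_subset.1 (isClosed_closure.isOpen_compl.mem_nhds hb)
  exact ⟨a, b, c, hac.1, hac.2, (disjoint_compl_left.mono_right subset_closure).mono_left hsub⟩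

theorem disjoint_Ioo_prod_Ioo {S : Type*} [LinearOrder S] {a b c a' b' c' : S}
    (h : b' ∉ Ioo a c) : Disjoint (Ioo a b ×ˢ Ioo b c) (Ioo a' b' ×ˢ Ioo b' c') := by
  rw [disjoint_left]
  rintro ⟨x, y⟩ ⟨⟨hax, -⟩, -, hyc⟩ ⟨⟨-, hxb'⟩, hb'y, -⟩
  rw [mem_Ioo, not_and_or, not_lt, not_lt] at h
  rcases h with h | h
  · exact (hxb'.trans_le h).not_gt hax
  · exact (hyc.trans_le h).not_gt hb'y

/-- If `S` is a Suslin line then `S × S` does not have the countable chain condition;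
indeed there is an `ω₁`-indexed family of pairwise disjoint nonempty open subsets of
`S × S`. -/
theorem stmt_11 (S : Type*) [LinearOrder S] [TopologicalSpace S] [OrderTopology S]
    (h : IsSuslinLine S) :
    ¬TopCCC (S × S) ∧
      ∃ U : (Cardinal.aleph 1).ord.ToType → Set (S × S),
        (∀ i, IsOpen (U i)) ∧ (∀ i, (U i).Nonempty) ∧
        Pairwise fun i j => Disjoint (U i) (U j) := by
  obtain ⟨_, _, _, -, -, -, hS⟩ := h
  obtain ⟨t, ht⟩ := exists_forall_image_Iio_of_countable countable_Iio_ord_aleph_one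
    (fun D (t : S × S × S) =>
      t.1 < t.2.1 ∧ t.2.1 < t.2.2 ∧ Disjoint (Ioo t.1 t.2.2) ((fun s => s.2.1) '' D))
    fun D hD => by
      obtain ⟨a, b, c, hab, hbc, hD'⟩ :=
        exists_Ioo_disjoint_of_not_separableSpace hS (hD.image fun s => s.2.1)
      exact ⟨(a, b, c), hab, hbc, hD'⟩
  let U i := Ioo (t i).1 (t i).2.1 ×ˢ Ioo (t i).2.1 (t i).2.2
  have hopen i : IsOpen (U i) := isOpen_Ioo.prod isOpen_Ioo
  have hne i : (U i).Nonempty :=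
    (nonempty_Ioo.2 (ht i).1).prod (nonempty_Ioo.2 (ht i).2.1)
  have hdisj : Pairwise (Disjoint on U) := pairwise_iff_lt.2 fun i j hij =>
    (disjoint_Ioo_prod_Ioo <| disjoint_right.1 (ht j).2.2 ⟨t i, mem_image_of_mem t hij, rfl⟩).symm
  exact ⟨not_topCCC_of_pairwise_disjoint U hopen hne hdisj, U, hopen, hne, hdisj⟩
end

section
/- Every C*-subalgebra of a C*-algebra with the strong countable chain condition has the strong countable chain condition. -/
/-- A C*-subalgebra (i.e. a closed *-subalgebra) `B` of a C*-algebra `A` is hereditary if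
whenever `a ∈ A` and `b ∈ B` are positive elements with `a ≤ b`, then `a ∈ B`. -/
def IsHereditarySubalgebra {A : Type*} [NonUnitalRing A] [Module ℂ A] [Star A]
    [TopologicalSpace A] [PartialOrder A] (B : NonUnitalStarSubalgebra ℂ A) : Prop :=
  IsClosed (B : Set A) ∧ ∀ a b : A, 0 ≤ a → 0 ≤ b → b ∈ B → a ≤ b → a ∈ B

/-- A C*-algebra has the strong countable chain condition (strong CCC) if every family of
pairwise orthogonal nonzero hereditary C*-subalgebras is countable; two hereditary
C*-subalgebras `B₁, B₂` are orthogonal if `b₁ * b₂ = 0` for all `b₁ ∈ B₁`, `b₂ ∈ B₂`. -/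
def StrongCCC (A : Type*) [NonUnitalRing A] [Module ℂ A] [Star A]
    [TopologicalSpace A] [PartialOrder A] : Prop :=
  ∀ 𝒮 : Set (NonUnitalStarSubalgebra ℂ A),
    (∀ B ∈ 𝒮, IsHereditarySubalgebra B ∧ ∃ b : A, b ∈ B ∧ b ≠ 0) →
    (𝒮.Pairwise fun B C => ∀ b ∈ B, ∀ c ∈ C, (b : A) * c = 0) → 𝒮.Countable


/-!
Send each C*-subalgebra `C` of `B` to its double annihilator `C⊥⊥` in `A`. An annihilator is
hereditary: if `0 ≤ a ≤ b` and `b c = 0`, then `c* a c` is squeezed between `0` and `c* b c = 0`,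
and writing `a = x* x` the C*-identity gives `x c = 0`, hence `a c = 0`. Orthogonal `C, D` satisfy
`D ⊆ C⊥`, so `C⊥⊥ ⊆ D⊥` is orthogonal to `D⊥⊥`; as `C ⊆ C⊥⊥`, nonzero members stay nonzero and
the map is injective on an orthogonal family, which is therefore countable by the strong CCC of `A`.
-/

open Function

namespace NonUnitalStarSubalgebra

section Algebra

variable {R A : Type*} [CommSemiring R] [NonUnitalSemiring A] [StarRing A] [Module R A]

def Orthogonal (S T : NonUnitalStarSubalgebra R A) : Prop :=
  ∀ s ∈ S, ∀ t ∈ T, s * t = 0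

theorem Orthogonal.map {A' : Type*} [NonUnitalSemiring A'] [StarRing A'] [Module R A']
    {S T : NonUnitalStarSubalgebra R A} (h : Orthogonal S T) (f : A →⋆ₙₐ[R] A') :
    Orthogonal (S.map f) (T.map f) := by
  rintro _ ⟨s, hs, rfl⟩ _ ⟨t, ht, rfl⟩
  rw [← map_mul, h s hs t ht, map_zero]

variable [IsScalarTower R A A] [SMulCommClass R A A]

def annihilator (S : NonUnitalStarSubalgebra R A) : NonUnitalStarSubalgebra R A where
  carrier := {a | ∀ s ∈ S, a * s = 0 ∧ s * a = 0}
  add_mem' {a b} ha hb s hs := by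
    simp [add_mul, mul_add, (ha s hs).1, (ha s hs).2, (hb s hs).1, (hb s hs).2]
  zero_mem' s _ := by simp
  mul_mem' {a b} ha hb s hs :=
    ⟨by rw [mul_assoc, (hb s hs).1, mul_zero], by rw [← mul_assoc, (ha s hs).2, zero_mul]⟩
  smul_mem' c a ha s hs := by
    simp [smul_mul_assoc, mul_smul_comm, (ha s hs).1, (ha s hs).2]
  star_mem' {a} ha s hs := by
    have h := ha (star s) (star_mem hs)
    constructor
    · simpa using congr_arg star h.2
    · simpa using congr_arg star h.1

theorem mem_annihilator {S : NonUnitalStarSubalgebra R A} {a : A} :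
    a ∈ S.annihilator ↔ ∀ s ∈ S, a * s = 0 ∧ s * a = 0 :=
  Iff.rfl

theorem annihilator_antitone : Antitone (annihilator : NonUnitalStarSubalgebra R A → _) :=
  fun _ _ hST _ ha s hs => ha s (hST hs)

theorem le_annihilator_annihilator (S : NonUnitalStarSubalgebra R A) :
    S ≤ S.annihilator.annihilator :=
  fun s hs _ ha => (ha s hs).symm

theorem Orthogonal.le_annihilator {S T : NonUnitalStarSubalgebra R A} (hST : Orthogonal S T)
    (hTS : Orthogonal T S) : T ≤ S.annihilator :=
  fun t ht s hs => ⟨hTS t ht s hs, hST s hs t ht⟩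

theorem orthogonal_annihilator_annihilator {S T : NonUnitalStarSubalgebra R A}
    (hT : T ≤ S.annihilator) : Orthogonal S.annihilator.annihilator T.annihilator.annihilator :=
  fun _ hx _ hy => (hy _ (annihilator_antitone hT hx)).2

theorem isClosed_annihilator [TopologicalSpace A] [SeparatelyContinuousMul A] [T1Space A]
    (S : NonUnitalStarSubalgebra R A) : IsClosed (S.annihilator : Set A) := by
  have h : (S.annihilator : Set A) = ⋂ s ∈ S, (· * s) ⁻¹' {0} ∩ (s * ·) ⁻¹' {0} := by
    ext a
    simp [mem_annihilator]
  rw [h]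
  exact isClosed_biInter fun s _ =>
    (isClosed_singleton.preimage (continuous_mul_const s)).inter
      (isClosed_singleton.preimage (continuous_const_mul s))

end Algebra

section CStarRing

variable {R A : Type*} [CommSemiring R] [NonUnitalNormedRing A] [StarRing A] [CStarRing A]
  [Module R A]

theorem Orthogonal.eq_zero_of_mem {S T : NonUnitalStarSubalgebra R A} (h : Orthogonal S T)
    {x : A} (hS : x ∈ S) (hT : x ∈ T) : x = 0 :=
  (CStarRing.star_mul_self_eq_zero_iff x).mp (h _ (star_mem hS) x hT)

theorem injOn_of_pairwise_orthogonal {ι : Type*} {Φ : ι → NonUnitalStarSubalgebra R A}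
    {s : Set ι} (hne : ∀ i ∈ s, ∃ x ∈ Φ i, x ≠ 0) (horth : s.Pairwise (Orthogonal on Φ)) :
    s.InjOn Φ := by
  intro i hi j hj hij
  by_contra hne'
  obtain ⟨x, hx, hx0⟩ := hne i hi
  exact hx0 ((horth hi hj hne').eq_zero_of_mem hx (hij ▸ hx))

end CStarRing

end NonUnitalStarSubalgebra

section CStarAlgebra

variable {A : Type*} [NonUnitalCStarAlgebra A] [PartialOrder A] [StarOrderedRing A]

theorem mul_eq_zero_of_nonneg_of_le {a b c : A} (ha : 0 ≤ a) (hab : a ≤ b) (hbc : b * c = 0) :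
    a * c = 0 := by
  obtain ⟨x, rfl⟩ := CStarAlgebra.nonneg_iff_eq_star_mul_self.mp ha
  have hconj : star c * (star x * x) * c = 0 :=
    le_antisymm (by simpa [mul_assoc, hbc] using star_left_conjugate_le_conjugate hab c)
      (star_left_conjugate_nonneg ha c)
  have hxc : x * c = 0 := by
    rw [← CStarRing.star_mul_self_eq_zero_iff, star_mul, ← hconj]
    noncomm_ring
  rw [mul_assoc, hxc, mul_zero]

theorem mul_eq_zero_of_nonneg_of_le' {a b c : A} (ha : 0 ≤ a) (hab : a ≤ b) (hcb : c * b = 0) :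
    c * a = 0 := by
  have hb : b * star c = 0 := by
    simpa [(ha.trans hab).isSelfAdjoint.star_eq] using congr_arg star hcb
  simpa [ha.isSelfAdjoint.star_eq] using congr_arg star (mul_eq_zero_of_nonneg_of_le ha hab hb)

theorem NonUnitalStarSubalgebra.isHereditarySubalgebra_annihilator
    (S : NonUnitalStarSubalgebra ℂ A) : IsHereditarySubalgebra S.annihilator :=
  ⟨isClosed_annihilator S, fun _ _ ha _ hb hab s hs =>
    ⟨mul_eq_zero_of_nonneg_of_le ha hab (hb s hs).1,
      mul_eq_zero_of_nonneg_of_le' ha hab (hb s hs).2⟩⟩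

end CStarAlgebra

open NonUnitalStarSubalgebra

theorem stmt_17_general (A : Type*) [NonUnitalCStarAlgebra A] [PartialOrder A]
    [StarOrderedRing A] (h : StrongCCC A)
    (B : NonUnitalStarSubalgebra ℂ A) :
    StrongCCC B := by
  intro 𝒮 h𝒮 hortho
  let Φ : NonUnitalStarSubalgebra ℂ B → NonUnitalStarSubalgebra ℂ A :=
    fun C => (C.map (NonUnitalStarSubalgebraClass.subtype B)).annihilator.annihilator
  have hΦ_orth : 𝒮.Pairwise (Orthogonal on Φ) := fun C hC D hD hCD =>
    orthogonal_annihilator_annihilator <| (Orthogonal.map (hortho hC hD hCD) _).le_annihilator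
      (Orthogonal.map (hortho hD hC hCD.symm) _)
  have hΦ_ne : ∀ C ∈ 𝒮, ∃ x ∈ Φ C, x ≠ 0 := by
    intro C hC
    obtain ⟨b, hb, hb0⟩ := (h𝒮 C hC).2
    exact ⟨b, le_annihilator_annihilator _ (mem_map.mpr ⟨b, hb, rfl⟩),
      ZeroMemClass.coe_eq_zero.not.mpr hb0⟩
  have hΦ_inj : 𝒮.InjOn Φ := injOn_of_pairwise_orthogonal hΦ_ne hΦ_orth
  refine Set.countable_of_injective_of_countable_image hΦ_inj
    (h _ ?_ (hΦ_inj.pairwise_image.mpr hΦ_orth))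
  rintro _ ⟨C, hC, rfl⟩
  exact ⟨isHereditarySubalgebra_annihilator _, hΦ_ne C hC⟩

/-- Every C*-subalgebra (closed *-subalgebra) of a C*-algebra with the strong countable
chain condition has the strong countable chain condition. -/
theorem stmt_17 (A : Type*) [NonUnitalCStarAlgebra A] [PartialOrder A]
    [StarOrderedRing A] (h : StrongCCC A)
    (B : NonUnitalStarSubalgebra ℂ A) (hB : IsClosed (B : Set A)) :
    StrongCCC B :=
  stmt_17_general A h B
end
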